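/- If (x,y) ∈ [0,1]^2 with x = [0; a_1, a_2, …] irrational and y = [0; b_1, b_2, …], then for n ≥ a_1, writing n = a_1 + ⋯ + a_{j_n} + λ_n with 0 ≤ λ_n < a_{j_n+1}, the n-th iterate of the Farey natural extension satisfies ℱ^n(x,y) = ([0; a_{j_n+1} - λ_n, a_{j_n+2}, …], [0; λ_n + 1, a_{j_n}, …, a_2, a_1 - 1 + b_1, b_2, …]), and for 0 ≤ n < a_1, ℱ^n(x,y) = ([0; a_1 - n, a_2, …], [0; n + b_1, b_2, …]). -/

import Mathlib

noncomputable section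

/-- Ito's natural extension map of the Farey tent map on `Ω = [0,1]²`. -/
def Fbar (p : ℝ × ℝ) : ℝ × ℝ :=
  if p.1 ≤ 1 / 2 then (p.1 / (1 - p.1), p.2 / (1 + p.2))
  else ((1 - p.1) / p.1, 1 / (1 + p.2))

/-- Evaluation of a finite continued fraction with digit list `l` and tail `t`:
`cfVal [d₁, …, d_m] t = [0; d₁, …, d_m + t] = 1/(d₁ + 1/(d₂ + ⋯ + 1/(d_m + t)))`. -/
def cfVal : List ℤ → ℝ → ℝ
  | [], u => u
  | d :: l, u => 1 / ((d : ℝ) + cfVal l u)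

/-!
While the first coordinate `1/u` is at most `1/2`, `ℱ` acts by `(1/u, 1/w) ↦ (1/(u-1), 1/(w+1))`:
the current digit `a_{j+1}` of `x` is used up one unit per step, and each unit is added to the
reciprocal `w` of the second coordinate. Once `u = 1 + t_{j+1}`, one more step moves `x` to its
next tail `t_{j+1}` and sends `w` to `1 + 1/(w + a_{j+1} - 1)`, i.e. pushes the exhausted digit
onto the continued fraction of the second coordinate.
-/

open Finset

lemma Fbar_one_div_of_two_le {u w : ℝ} (hu : 2 ≤ u) (hw : 0 < w) :
    Fbar (1 / u, 1 / w) = (1 / (u - 1), 1 / (w + 1)) := by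
  have hle : 1 / u ≤ 1 / 2 := one_div_le_one_div_of_le two_pos hu
  have hu0 : u ≠ 0 := by linarith
  have hu1 : u - 1 ≠ 0 := by linarith
  have hw1 : w + 1 ≠ 0 := by linarith
  rw [Fbar, if_pos hle, Prod.mk.injEq]
  constructor <;> field_simp

lemma Fbar_one_div_of_lt_two {u : ℝ} (Y : ℝ) (hu0 : 0 < u) (hu : u < 2) :
    Fbar (1 / u, Y) = (u - 1, 1 / (1 + Y)) := by
  have hgt : ¬ 1 / u ≤ 1 / 2 := by
    rw [not_le]; exact one_div_lt_one_div_of_lt hu0 hu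
  rw [Fbar, if_neg hgt, Prod.mk.injEq]
  exact ⟨by field_simp, rfl⟩

lemma Fbar_iterate_one_div {k : ℕ} {u w : ℝ} (hu : k + 1 ≤ u) (hw : 0 < w) :
    Fbar^[k] (1 / u, 1 / w) = (1 / (u - k), 1 / (w + k)) := by
  induction k generalizing u w with
  | zero => simp
  | succ k ih =>
    push_cast at hu
    rw [Function.iterate_succ_apply, Fbar_one_div_of_two_le (by linarith) hw,
      ih (by linarith) (by linarith)]
    push_cast
    ring_nf

lemma Fbar_iterate_one_div_add {k : ℕ} {s w : ℝ} (hs0 : 0 ≤ s) (hs1 : s < 1) (hw : 0 < w) :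
    Fbar^[k + 1] (1 / (k + 1 + s), 1 / w) = (s, 1 / (1 + 1 / (w + k))) := by
  rw [Function.iterate_succ_apply', Fbar_iterate_one_div (by linarith) hw,
    show (k : ℝ) + 1 + s - k = 1 + s by ring, Fbar_one_div_of_lt_two _ (by linarith) (by linarith)]
  simp

/-- `1 / blockDenom a w₀ j` is the second coordinate of `ℱ^(a 1 + ⋯ + a j) (x, 1 / w₀)`. -/
def blockDenom (a : ℕ → ℤ) (w₀ : ℝ) : ℕ → ℝ
  | 0 => w₀
  | j + 1 => 1 + 1 / (blockDenom a w₀ j + (a (j + 1) - 1))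

lemma blockDenom_pos {a : ℕ → ℤ} {w₀ : ℝ} (ha : ∀ n, 1 ≤ a (n + 1)) (hw₀ : 0 < w₀) :
    ∀ j, 0 < blockDenom a w₀ j
  | 0 => hw₀
  | j + 1 => by
    have h1 : (1 : ℝ) ≤ a (j + 1) := by exact_mod_cast ha j
    have h2 : 0 < blockDenom a w₀ j + (a (j + 1) - 1) := by
      linarith [blockDenom_pos ha hw₀ j]
    rw [blockDenom]
    positivity

/-- The digits `[a j, a (j-1), …, a 2, a 1 - 1 + b₁]`. -/
def reversedDigits (a : ℕ → ℤ) (b₁ : ℤ) (j : ℕ) : List ℤ :=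
  ((List.range (j - 1)).map fun i => a (j - i)) ++ [a 1 - 1 + b₁]

lemma reversedDigits_succ (a : ℕ → ℤ) (b₁ : ℤ) {j : ℕ} (hj : 1 ≤ j) :
    reversedDigits a b₁ (j + 1) = a (j + 1) :: reversedDigits a b₁ j := by
  obtain ⟨j, rfl⟩ := Nat.exists_eq_add_of_le' hj
  simp only [reversedDigits, Nat.add_sub_cancel, List.range_succ_eq_map, List.map_cons,
    List.map_map, Nat.sub_zero, List.cons_append]
  congr 2
  exact List.map_congr_left fun i _ => congrArg a (by omega)

lemma blockDenom_eq_one_add_cfVal (a : ℕ → ℤ) (b₁ : ℤ) (y' : ℝ) {j : ℕ} (hj : 1 ≤ j) :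
    blockDenom a (b₁ + y') j = 1 + cfVal (reversedDigits a b₁ j) y' := by
  induction j, hj using Nat.le_induction with
  | base =>
    simp only [blockDenom, reversedDigits, Nat.sub_self, List.range_zero, List.map_nil,
      List.nil_append, cfVal]
    push_cast
    ring
  | succ j hj ih =>
    rw [blockDenom, ih, reversedDigits_succ a b₁ hj, cfVal]
    ring_nf

lemma one_le_of_eq_one_div_add {a : ℕ → ℤ} {t : ℕ → ℝ}
    (ht : ∀ n : ℕ, 0 < t n ∧ t n < 1 ∧ t n = 1 / (a (n + 1) + t (n + 1))) (n : ℕ) :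
    1 ≤ a (n + 1) := by
  obtain ⟨h0, h1, h⟩ := ht n
  rw [h] at h0 h1
  have hgt : 1 < (a (n + 1) : ℝ) + t (n + 1) := (div_lt_one (one_div_pos.mp h0)).mp h1
  have hpos : (0 : ℝ) < a (n + 1) := by linarith [(ht (n + 1)).2.1]
  exact_mod_cast hpos

lemma natCast_sum_toNat {a : ℕ → ℤ} (ha : ∀ n, 1 ≤ a (n + 1)) (j : ℕ) :
    ((∑ i ∈ Icc 1 j, (a i).toNat : ℕ) : ℤ) = ∑ i ∈ Icc 1 j, a i := by
  push_cast
  refine sum_congr rfl fun i hi => Int.toNat_of_nonneg ?_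
  obtain ⟨i, rfl⟩ := Nat.exists_eq_add_of_le' (mem_Icc.mp hi).1
  linarith [ha i]

section Orbit

variable {a : ℕ → ℤ} {t : ℕ → ℝ} {w₀ : ℝ}

lemma Fbar_iterate_sum_digits
    (ht : ∀ n : ℕ, 0 < t n ∧ t n < 1 ∧ t n = 1 / (a (n + 1) + t (n + 1))) (hw₀ : 0 < w₀) :
    ∀ j, Fbar^[∑ i ∈ Icc 1 j, (a i).toNat] (t 0, 1 / w₀) = (t j, 1 / blockDenom a w₀ j)
  | 0 => by simp [blockDenom]
  | j + 1 => by
    have ha := one_le_of_eq_one_div_add ht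
    obtain ⟨k, hk⟩ : ∃ k : ℕ, a (j + 1) = k + 1 := ⟨(a (j + 1) - 1).toNat, by have := ha j; omega⟩
    have hkR : (a (j + 1) : ℝ) = k + 1 := by exact_mod_cast hk
    rw [sum_Icc_succ_top (by omega), hk, add_comm, Function.iterate_add_apply,
      Fbar_iterate_sum_digits ht hw₀ j, (ht j).2.2, hkR, show (k + 1 : ℤ).toNat = k + 1 by omega,
      Fbar_iterate_one_div_add (ht _).1.le (ht _).2.1 (blockDenom_pos ha hw₀ j)]
    simp [blockDenom, hkR]

lemma Fbar_iterate_add_sum_digits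
    (ht : ∀ n : ℕ, 0 < t n ∧ t n < 1 ∧ t n = 1 / (a (n + 1) + t (n + 1))) (hw₀ : 0 < w₀)
    (j lam : ℕ) (hlam : (lam : ℤ) < a (j + 1)) :
    Fbar^[lam + ∑ i ∈ Icc 1 j, (a i).toNat] (t 0, 1 / w₀) =
      (1 / ((a (j + 1) : ℝ) - lam + t (j + 1)), 1 / (blockDenom a w₀ j + lam)) := by
  have hlamR : (lam : ℝ) + 1 ≤ a (j + 1) := by exact_mod_cast hlam
  rw [Function.iterate_add_apply, Fbar_iterate_sum_digits ht hw₀, (ht j).2.2,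
    Fbar_iterate_one_div (by linarith [(ht (j + 1)).1])
      (blockDenom_pos (one_le_of_eq_one_div_add ht) hw₀ j)]
  ring_nf

end Orbit

theorem stmt16_general (x y : ℝ)
    (a : ℕ → ℤ) (t : ℕ → ℝ) (ht0 : t 0 = x)
    (ht : ∀ n : ℕ, 0 < t n ∧ t n < 1 ∧ t n = 1 / (a (n + 1) + t (n + 1)))
    (b1 : ℤ) (y' : ℝ) (hb1 : 1 ≤ b1) (hy'0 : 0 ≤ y')
    (hy : y = 1 / ((b1 : ℝ) + y')) :
    (∀ n : ℕ, (n : ℤ) < a 1 →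
      Fbar^[n] (x, y) =
        (1 / (((a 1 : ℝ) - n) + t 1), 1 / (((n : ℝ) + (b1 : ℝ)) + y'))) ∧
    (∀ (n j : ℕ) (lam : ℤ), 1 ≤ j → 0 ≤ lam → lam < a (j + 1) →
      (n : ℤ) = (∑ i ∈ Finset.Icc 1 j, a i) + lam →
      Fbar^[n] (x, y) =
        (1 / (((a (j + 1) : ℝ) - (lam : ℝ)) + t (j + 1)),
          cfVal ((lam + 1) ::
            (((List.range (j - 1)).map fun i => a (j - i)) ++ [a 1 - 1 + b1])) y')) := by
  have hw₀ : 0 < (b1 : ℝ) + y' := by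
    have : (1 : ℝ) ≤ b1 := by exact_mod_cast hb1
    linarith
  have orbit : ∀ (n j : ℕ) (lam : ℤ), 0 ≤ lam → lam < a (j + 1) →
      (n : ℤ) = (∑ i ∈ Icc 1 j, a i) + lam →
      Fbar^[n] (x, y) = (1 / ((a (j + 1) : ℝ) - lam + t (j + 1)),
        1 / (blockDenom a (b1 + y') j + lam)) := by
    intro n j lam hlam0 hlam hn
    lift lam to ℕ using hlam0
    have hsum := natCast_sum_toNat (one_le_of_eq_one_div_add ht) j
    rw [show n = lam + ∑ i ∈ Icc 1 j, (a i).toNat by omega, ← ht0, hy]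
    exact_mod_cast Fbar_iterate_add_sum_digits ht hw₀ j lam hlam
  refine ⟨fun n hn => ?_, fun n j lam hj hlam0 hlam hn => ?_⟩
  · rw [orbit n 0 n (by positivity) hn (by simp), blockDenom]
    push_cast
    ring_nf
  · rw [orbit n j lam hlam0 hlam hn, ← reversedDigits, blockDenom_eq_one_add_cfVal a b1 y' hj,
      cfVal]
    push_cast
    ring_nf

/-- Explicit formula for the iterates of `ℱ` in terms of continued fraction expansions.
Here `x = [0; a_1, a_2, …]` is irrational with tails `t n = [0; a_{n+1}, a_{n+2}, …]`,
and `y = [0; b_1, b_2, …] = 1/(b_1 + y')` with `y' = [0; b_2, b_3, …] ∈ [0,1]`.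
For `0 ≤ n < a_1`, `ℱⁿ(x,y) = ([0; a_1 - n, a_2, …], [0; n + b_1, b_2, …])`;
for `n ≥ a_1`, writing `n = a_1 + ⋯ + a_{j} + λ` with `j ≥ 1`, `0 ≤ λ < a_{j+1}`,
`ℱⁿ(x,y) = ([0; a_{j+1} - λ, a_{j+2}, …], [0; λ+1, a_j, …, a_2, a_1 - 1 + b_1, b_2, …])`. -/
theorem stmt16 (x y : ℝ) (hirr : Irrational x)
    (a : ℕ → ℤ) (t : ℕ → ℝ) (ht0 : t 0 = x)
    (ht : ∀ n : ℕ, 0 < t n ∧ t n < 1 ∧ t n = 1 / (a (n + 1) + t (n + 1)))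
    (b1 : ℤ) (y' : ℝ) (hb1 : 1 ≤ b1) (hy'0 : 0 ≤ y') (hy'1 : y' ≤ 1)
    (hy : y = 1 / ((b1 : ℝ) + y')) :
    (∀ n : ℕ, (n : ℤ) < a 1 →
      Fbar^[n] (x, y) =
        (1 / (((a 1 : ℝ) - n) + t 1), 1 / (((n : ℝ) + (b1 : ℝ)) + y'))) ∧
    (∀ (n j : ℕ) (lam : ℤ), 1 ≤ j → 0 ≤ lam → lam < a (j + 1) →
      (n : ℤ) = (∑ i ∈ Finset.Icc 1 j, a i) + lam →
      Fbar^[n] (x, y) =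
        (1 / (((a (j + 1) : ℝ) - (lam : ℝ)) + t (j + 1)),
          cfVal ((lam + 1) ::
            (((List.range (j - 1)).map fun i => a (j - i)) ++ [a 1 - 1 + b1])) y')) :=
  stmt16_general x y a t ht0 ht b1 y' hb1 hy'0 hy

end
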